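/- With notation as in the context, the (0,6)-tensor R·C vanishes identically if and only if μ = 0, or a = 0, b = 0 and c² + k̃ = 0. In particular, if k̃ > 0 then R·C = 0 if and only if μ = 0. (This is the pointwise algebraic form of: a Wintgen ideal submanifold is Weyl-semi-symmetric iff it is totally umbilical or, when k̃ ≤ 0, its Choi–Lu shape operators have a = b = 0 and c² = −k̃.) -/
import Mathlib


noncomputable section

namespace Wintgen

/-- The standard inner product `g` on `ℝ^n`. -/
def gg (n : ℕ) (x y : Fin n → ℝ) : ℝ := ∑ i, x i * y i

/-- The standard orthonormal basis vectors `E_i` (0-indexed). -/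
def E (n : ℕ) (i : Fin n) : Fin n → ℝ := fun j => if j = i then 1 else 0

/-- Auxiliary: the `j`-th coordinate of `x` (0 if out of range). -/
def coord (n : ℕ) (x : Fin n → ℝ) (j : ℕ) : ℝ := if h : j < n then x ⟨j, h⟩ else 0

/-- The Choi–Lu shape operator `A_1`. -/
def A1 (n : ℕ) (a μ : ℝ) (x : Fin n → ℝ) : Fin n → ℝ := fun i =>
  if (i : ℕ) = 0 then a * x i + μ * coord n x 1
  else if (i : ℕ) = 1 then μ * coord n x 0 + a * x i
  else a * x i

/-- The Choi–Lu shape operator `A_2`. -/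
def A2 (n : ℕ) (b μ : ℝ) (x : Fin n → ℝ) : Fin n → ℝ := fun i =>
  if (i : ℕ) = 0 then (b + μ) * x i
  else if (i : ℕ) = 1 then (b - μ) * x i
  else b * x i

/-- The Choi–Lu shape operator `A_3 = c • id`. -/
def A3 (n : ℕ) (c : ℝ) (x : Fin n → ℝ) : Fin n → ℝ := fun i => c * x i

/-- The Gauss-equation curvature tensor `R`. -/
def Rt (n : ℕ) (a b c μ k : ℝ) (X Y Z W : Fin n → ℝ) : ℝ :=
  (gg n (A1 n a μ X) W * gg n (A1 n a μ Y) Z - gg n (A1 n a μ X) Z * gg n (A1 n a μ Y) W)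
  + (gg n (A2 n b μ X) W * gg n (A2 n b μ Y) Z - gg n (A2 n b μ X) Z * gg n (A2 n b μ Y) W)
  + (gg n (A3 n c X) W * gg n (A3 n c Y) Z - gg n (A3 n c X) Z * gg n (A3 n c Y) W)
  + k * (gg n X W * gg n Y Z - gg n X Z * gg n Y W)

/-- The Ricci tensor `Ricc(X,Y) = ∑ i, R(E_i, X, Y, E_i)`. -/
def Ricc (n : ℕ) (a b c μ k : ℝ) (X Y : Fin n → ℝ) : ℝ :=
  ∑ i, Rt n a b c μ k (E n i) X Y (E n i)

/-- The scalar curvature `τ`. -/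
def tau (n : ℕ) (a b c μ k : ℝ) : ℝ := ∑ i, Ricc n a b c μ k (E n i) (E n i)

/-- The Kulkarni–Nomizu product of two bilinear forms. -/
def KN (n : ℕ) (A B : (Fin n → ℝ) → (Fin n → ℝ) → ℝ) (X1 X2 X3 X4 : Fin n → ℝ) : ℝ :=
  A X1 X4 * B X2 X3 + A X2 X3 * B X1 X4 - A X1 X3 * B X2 X4 - A X2 X4 * B X1 X3

/-- The Weyl conformal curvature tensor `C`. -/
def Ct (n : ℕ) (a b c μ k : ℝ) (X Y Z W : Fin n → ℝ) : ℝ :=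
  Rt n a b c μ k X Y Z W
    - (1 / ((n : ℝ) - 2)) * KN n (gg n) (Ricc n a b c μ k) X Y Z W
    + (tau n a b c μ k / (2 * ((n : ℝ) - 1) * ((n : ℝ) - 2))) * KN n (gg n) (gg n) X Y Z W

/-- The endomorphism `(X ∧_A Y)` applied to `Z`. -/
def wedge (n : ℕ) (A : (Fin n → ℝ) → (Fin n → ℝ) → ℝ) (X Y Z : Fin n → ℝ) : Fin n → ℝ :=
  fun j => A Y Z * X j - A X Z * Y j

/-- The endomorphism determined by `g(Op(X,Y)Z, W) = T(X,Y,Z,W)`: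
its `j`-th component is `T(X,Y,Z,E_j)`. -/
def curvOp (n : ℕ) (T : (Fin n → ℝ) → (Fin n → ℝ) → (Fin n → ℝ) → (Fin n → ℝ) → ℝ)
    (X Y Z : Fin n → ℝ) : Fin n → ℝ := fun j => T X Y Z (E n j)

/-- Derivation-type action of a family of operators on a (0,4)-tensor. -/
def dotT (n : ℕ) (Op : (Fin n → ℝ) → (Fin n → ℝ) → (Fin n → ℝ) → (Fin n → ℝ))
    (T : (Fin n → ℝ) → (Fin n → ℝ) → (Fin n → ℝ) → (Fin n → ℝ) → ℝ)
    (X1 X2 X3 X4 X Y : Fin n → ℝ) : ℝ :=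
  - T (Op X Y X1) X2 X3 X4 - T X1 (Op X Y X2) X3 X4
  - T X1 X2 (Op X Y X3) X4 - T X1 X2 X3 (Op X Y X4)

/-- The (0,6)-tensor `R · C`. -/
def RC (n : ℕ) (a b c μ k : ℝ) :=
  dotT n (fun X Y => curvOp n (Rt n a b c μ k) X Y) (Ct n a b c μ k)

/-- The (0,6)-tensor `C · R`. -/
def CR (n : ℕ) (a b c μ k : ℝ) :=
  dotT n (fun X Y => curvOp n (Ct n a b c μ k) X Y) (Rt n a b c μ k)

/-- The Tachibana tensor `Q(A, T)`. -/
def Q (n : ℕ) (A : (Fin n → ℝ) → (Fin n → ℝ) → ℝ)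
    (T : (Fin n → ℝ) → (Fin n → ℝ) → (Fin n → ℝ) → (Fin n → ℝ) → ℝ) :=
  dotT n (fun X Y => wedge n A X Y) T


def s1 (n : ℕ) (X Y : Fin n → ℝ) : ℝ := coord n X 0 * coord n Y 1 + coord n X 1 * coord n Y 0
def s2 (n : ℕ) (X Y : Fin n → ℝ) : ℝ := coord n X 0 * coord n Y 0 - coord n X 1 * coord n Y 1
def pp (n : ℕ) (X Y : Fin n → ℝ) : ℝ := coord n X 0 * coord n Y 0 + coord n X 1 * coord n Y 1

lemma coord_lt {n : ℕ} (x : Fin n → ℝ) {j : ℕ} (h : j < n) : coord n x j = x ⟨j, h⟩ := dif_pos h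

lemma ggE {n : ℕ} (i : Fin n) (X : Fin n → ℝ) : gg n (E n i) X = X i := by
  simp [gg, E, ite_mul]

lemma ggE' {n : ℕ} (i : Fin n) (X : Fin n → ℝ) : gg n X (E n i) = X i := by
  simp [gg, E, mul_ite]

lemma gg_comm {n : ℕ} (X Y : Fin n → ℝ) : gg n X Y = gg n Y X := by
  simp [gg, mul_comm]

lemma coordE {n : ℕ} {j m : ℕ} (hj : j < n) (hm : m < n) :
    coord n (E n ⟨j, hj⟩) m = if m = j then 1 else 0 := by
  rw [coord_lt _ hm]; simp [E, Fin.ext_iff]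

lemma sum_split {n : ℕ} (hn : 4 ≤ n) (f g u v : Fin n → ℝ)
    (key : ∀ i : Fin n, f i = g i +
      ((if i = ⟨0, by omega⟩ then u i else 0) + (if i = ⟨1, by omega⟩ then v i else 0))) :
    ∑ i, f i = (∑ i, g i) + (u ⟨0, by omega⟩ + v ⟨1, by omega⟩) := by
  rw [Finset.sum_congr rfl (fun i _ => key i)]
  rw [Finset.sum_add_distrib, Finset.sum_add_distrib, Finset.sum_ite_eq', Finset.sum_ite_eq']
  simp

lemma ggA1 {n : ℕ} (hn : 4 ≤ n) (a μ : ℝ) (X Y : Fin n → ℝ) :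
    gg n (A1 n a μ X) Y = a * gg n X Y + μ * s1 n X Y := by
  have h0 : (0:ℕ) < n := by omega
  have h1 : (1:ℕ) < n := by omega
  have key : ∀ i : Fin n, A1 n a μ X i * Y i = a * (X i * Y i) +
      ((if i = ⟨0, by omega⟩ then μ * coord n X 1 * coord n Y 0 else 0) +
       (if i = ⟨1, by omega⟩ then μ * coord n X 0 * coord n Y 1 else 0)) := by
    intro i
    by_cases e0 : i = ⟨0, h0⟩
    · subst e0; simp [A1, coord_lt _ h0]; ring
    · by_cases e1 : i = ⟨1, h1⟩
      · subst e1; simp [A1, coord_lt _ h1]; ring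
      · have v0 : (i : ℕ) ≠ 0 := by simpa [Fin.ext_iff] using e0
        have v1 : (i : ℕ) ≠ 1 := by simpa [Fin.ext_iff] using e1
        simp [A1, v0, v1, e0, e1, mul_assoc]
  have := sum_split hn _ _ _ _ key
  rw [gg, this, gg, ← Finset.mul_sum, s1, coord_lt _ h0, coord_lt _ h1]
  ring

lemma ggA2 {n : ℕ} (hn : 4 ≤ n) (b μ : ℝ) (X Y : Fin n → ℝ) :
    gg n (A2 n b μ X) Y = b * gg n X Y + μ * s2 n X Y := by
  have h0 : (0:ℕ) < n := by omega
  have h1 : (1:ℕ) < n := by omega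
  have key : ∀ i : Fin n, A2 n b μ X i * Y i = b * (X i * Y i) +
      ((if i = ⟨0, by omega⟩ then μ * coord n X 0 * coord n Y 0 else 0) +
       (if i = ⟨1, by omega⟩ then - (μ * coord n X 1 * coord n Y 1) else 0)) := by
    intro i
    by_cases e0 : i = ⟨0, h0⟩
    · subst e0; simp [A2, coord_lt _ h0]; ring
    · by_cases e1 : i = ⟨1, h1⟩
      · subst e1; simp [A2, coord_lt _ h1]; ring
      · have v0 : (i : ℕ) ≠ 0 := by simpa [Fin.ext_iff] using e0
        have v1 : (i : ℕ) ≠ 1 := by simpa [Fin.ext_iff] using e1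
        simp [A2, v0, v1, e0, e1, mul_assoc]
  have := sum_split hn _ _ _ _ key
  rw [gg, this, gg, ← Finset.mul_sum, s2, coord_lt _ h0, coord_lt _ h1]
  ring

lemma ggA3 {n : ℕ} (c : ℝ) (X Y : Fin n → ℝ) :
    gg n (A3 n c X) Y = c * gg n X Y := by
  simp [gg, A3, Finset.mul_sum, mul_assoc]

lemma Rt_closed {n : ℕ} (hn : 4 ≤ n) (a b c μ k : ℝ) (X Y Z W : Fin n → ℝ) :
    Rt n a b c μ k X Y Z W =
    ((a * gg n X W + μ * s1 n X W) * (a * gg n Y Z + μ * s1 n Y Z)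
      - (a * gg n X Z + μ * s1 n X Z) * (a * gg n Y W + μ * s1 n Y W))
    + ((b * gg n X W + μ * s2 n X W) * (b * gg n Y Z + μ * s2 n Y Z)
      - (b * gg n X Z + μ * s2 n X Z) * (b * gg n Y W + μ * s2 n Y W))
    + c^2 * (gg n X W * gg n Y Z - gg n X Z * gg n Y W)
    + k * (gg n X W * gg n Y Z - gg n X Z * gg n Y W) := by
  simp only [Rt, ggA1 hn, ggA2 hn, ggA3]
  ring

lemma Ricc_closed {n : ℕ} (hn : 4 ≤ n) (a b c μ k : ℝ) (X Y : Fin n → ℝ) :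
    Ricc n a b c μ k X Y =
      ((n:ℝ)-1)*(a^2+b^2+c^2+k) * gg n X Y
      + ((n:ℝ)-2)*μ*(a * s1 n X Y + b * s2 n X Y)
      - 2*μ^2 * pp n X Y := by
  have h0 : (0:ℕ) < n := by omega
  have h1 : (1:ℕ) < n := by omega
  have key : ∀ i : Fin n, Rt n a b c μ k (E n i) X Y (E n i) =
      ((a^2+b^2+c^2+k) * gg n X Y + μ*(a * s1 n X Y + b * s2 n X Y)
        - (a^2+b^2+c^2+k) * (X i * Y i)) +
      ((if i = ⟨0, by omega⟩ then
          μ^2 * s2 n X Y + b*μ*gg n X Y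
          - (a*coord n Y 0 + μ*coord n Y 1)*(a*coord n X 0 + μ*coord n X 1)
          - (b+μ)^2*(coord n X 0*coord n Y 0) - (c^2+k)*(coord n X 0*coord n Y 0)
          + (a^2+b^2+c^2+k)*(coord n X 0*coord n Y 0) else 0) +
       (if i = ⟨1, by omega⟩ then
          -(μ^2 * s2 n X Y) - b*μ*gg n X Y
          - (a*coord n Y 1 + μ*coord n Y 0)*(a*coord n X 1 + μ*coord n X 0)
          - (b-μ)^2*(coord n X 1*coord n Y 1) - (c^2+k)*(coord n X 1*coord n Y 1)
          + (a^2+b^2+c^2+k)*(coord n X 1*coord n Y 1) else 0)) := by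
    intro i
    by_cases e0 : i = ⟨0, h0⟩
    · subst e0
      rw [Rt_closed hn]
      simp only [ggE, ggE', s1, s2, pp, coordE h0 h0, coordE h0 h1, coord_lt _ h0, coord_lt _ h1]
      simp [E]
      ring
    · by_cases e1 : i = ⟨1, h1⟩
      · subst e1
        rw [Rt_closed hn]
        simp only [ggE, ggE', s1, s2, pp, coordE h1 h0, coordE h1 h1, coord_lt _ h0, coord_lt _ h1]
        simp [E]
        ring
      · have w0 : coord n (E n i) 0 = 0 := by
          rw [coord_lt _ h0]; simp [E]; intro h; exact absurd h.symm e0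
        have w1 : coord n (E n i) 1 = 0 := by
          rw [coord_lt _ h1]; simp [E]; intro h; exact absurd h.symm e1
        have wE : gg n (E n i) (E n i) = 1 := by rw [ggE]; simp [E]
        rw [Rt_closed hn]
        simp only [ggE, ggE', s1, s2, pp, w0, w1, wE, e0, e1, if_false]
        ring
  have gXY : (∑ i, X i * Y i) = gg n X Y := rfl
  rw [Ricc, sum_split hn _ _ _ _ key]
  rw [Finset.sum_sub_distrib, Finset.sum_const, ← Finset.mul_sum, gXY]
  simp only [Finset.card_univ, Fintype.card_fin, nsmul_eq_mul]
  rw [s1, s2, pp, coord_lt _ h0, coord_lt _ h1]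
  ring

lemma tau_closed {n : ℕ} (hn : 4 ≤ n) (a b c μ k : ℝ) :
    tau n a b c μ k = (n:ℝ)*((n:ℝ)-1)*(a^2+b^2+c^2+k) - 4*μ^2 := by
  have h0 : (0:ℕ) < n := by omega
  have h1 : (1:ℕ) < n := by omega
  have key : ∀ i : Fin n, Ricc n a b c μ k (E n i) (E n i) =
      ((n:ℝ)-1)*(a^2+b^2+c^2+k) +
      ((if i = ⟨0, by omega⟩ then ((n:ℝ)-2)*μ*b - 2*μ^2 else 0) +
       (if i = ⟨1, by omega⟩ then -(((n:ℝ)-2)*μ*b) - 2*μ^2 else 0)) := by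
    intro i
    rw [Ricc_closed hn]
    by_cases e0 : i = ⟨0, h0⟩
    · subst e0
      have wE : gg n (E n ⟨0,h0⟩) (E n ⟨0,h0⟩) = 1 := by rw [ggE]; simp [E]
      simp only [s1, s2, pp, coordE h0 h0, coordE h0 h1, wE]
      norm_num
      ring
    · by_cases e1 : i = ⟨1, h1⟩
      · subst e1
        have wE : gg n (E n ⟨1,h1⟩) (E n ⟨1,h1⟩) = 1 := by rw [ggE]; simp [E]
        simp only [s1, s2, pp, coordE h1 h0, coordE h1 h1, wE]
        norm_num
        ring
      · have w0 : coord n (E n i) 0 = 0 := by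
          rw [coord_lt _ h0]; simp [E]; intro h; exact absurd h.symm e0
        have w1 : coord n (E n i) 1 = 0 := by
          rw [coord_lt _ h1]; simp [E]; intro h; exact absurd h.symm e1
        have wE : gg n (E n i) (E n i) = 1 := by rw [ggE]; simp [E]
        simp only [s1, s2, pp, w0, w1, wE, e0, e1, if_false]
        ring
  rw [tau, sum_split hn _ _ _ _ key]
  rw [Finset.sum_const]
  simp only [Finset.card_univ, Fintype.card_fin, nsmul_eq_mul]
  ring

lemma gg_curvOp {n : ℕ} (hn : 4 ≤ n) (a b c μ k : ℝ) (X Y Z W : Fin n → ℝ) :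
    gg n (curvOp n (Rt n a b c μ k) X Y Z) W = Rt n a b c μ k X Y Z W := by
  have h0 : (0:ℕ) < n := by omega
  have h1 : (1:ℕ) < n := by omega
  have key : ∀ j : Fin n, curvOp n (Rt n a b c μ k) X Y Z j * W j =
      ((a*(a * gg n Y Z + μ * s1 n Y Z) + b*(b * gg n Y Z + μ * s2 n Y Z) + (c^2+k) * gg n Y Z) * (X j * W j)
        - (a*(a * gg n X Z + μ * s1 n X Z) + b*(b * gg n X Z + μ * s2 n X Z) + (c^2+k) * gg n X Z) * (Y j * W j)) +
      ((if j = ⟨0, by omega⟩ then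
          (μ*coord n X 1*(a * gg n Y Z + μ * s1 n Y Z) - (a * gg n X Z + μ * s1 n X Z)*(μ*coord n Y 1)
           + μ*coord n X 0*(b * gg n Y Z + μ * s2 n Y Z) - (b * gg n X Z + μ * s2 n X Z)*(μ*coord n Y 0)) * W j else 0) +
       (if j = ⟨1, by omega⟩ then
          (μ*coord n X 0*(a * gg n Y Z + μ * s1 n Y Z) - (a * gg n X Z + μ * s1 n X Z)*(μ*coord n Y 0)
           - μ*coord n X 1*(b * gg n Y Z + μ * s2 n Y Z) + (b * gg n X Z + μ * s2 n X Z)*(μ*coord n Y 1)) * W j else 0)) := by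
    intro j
    have hc : curvOp n (Rt n a b c μ k) X Y Z j = Rt n a b c μ k X Y Z (E n j) := rfl
    rw [hc, Rt_closed hn]
    by_cases e0 : j = ⟨0, h0⟩
    · subst e0
      simp only [ggE', s1, s2, coordE h0 h0, coordE h0 h1, coord_lt _ h0, coord_lt _ h1]
      norm_num
      ring
    · by_cases e1 : j = ⟨1, h1⟩
      · subst e1
        simp only [ggE', s1, s2, coordE h1 h0, coordE h1 h1, coord_lt _ h0, coord_lt _ h1]
        norm_num
        ring
      · have w0 : coord n (E n j) 0 = 0 := by
          rw [coord_lt _ h0]; simp [E]; intro h; exact absurd h.symm e0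
        have w1 : coord n (E n j) 1 = 0 := by
          rw [coord_lt _ h1]; simp [E]; intro h; exact absurd h.symm e1
        simp only [ggE', s1, s2, w0, w1, e0, e1, if_false]
        ring
  have gXW : (∑ i, X i * W i) = gg n X W := rfl
  have gYW : (∑ i, Y i * W i) = gg n Y W := rfl
  rw [gg, sum_split hn _ _ _ _ key]
  rw [Finset.sum_sub_distrib, ← Finset.mul_sum, ← Finset.mul_sum, gXW, gYW]
  rw [Rt_closed hn]
  simp only [s1, s2, pp]
  simp only [← coord_lt]
  ring


lemma gg_curvOp' {n : ℕ} (hn : 4 ≤ n) (a b c μ k : ℝ) (X Y Z W : Fin n → ℝ) :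
    gg n W (curvOp n (Rt n a b c μ k) X Y Z) = Rt n a b c μ k X Y Z W := by
  rw [gg_comm, gg_curvOp hn]

lemma coord_curvOp0 {n : ℕ} (hn : 4 ≤ n) (a b c μ k : ℝ) (X Y Z : Fin n → ℝ) :
    coord n (curvOp n (Rt n a b c μ k) X Y Z) 0 =
      (a * coord n X 0 + μ * coord n X 1) * (a * gg n Y Z + μ * s1 n Y Z)
      - (a * gg n X Z + μ * s1 n X Z) * (a * coord n Y 0 + μ * coord n Y 1)
      + ((b * coord n X 0 + μ * coord n X 0) * (b * gg n Y Z + μ * s2 n Y Z)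
      - (b * gg n X Z + μ * s2 n X Z) * (b * coord n Y 0 + μ * coord n Y 0))
      + c^2 * (coord n X 0 * gg n Y Z - gg n X Z * coord n Y 0)
      + k * (coord n X 0 * gg n Y Z - gg n X Z * coord n Y 0) := by
  have h0 : (0:ℕ) < n := by omega
  have h1 : (1:ℕ) < n := by omega
  rw [coord_lt _ h0]
  have hc : curvOp n (Rt n a b c μ k) X Y Z ⟨0, h0⟩ = Rt n a b c μ k X Y Z (E n ⟨0, h0⟩) := rfl
  rw [hc, Rt_closed hn]
  simp only [ggE', s1, s2, coordE h0 h0, coordE h0 h1]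
  norm_num
  simp only [← coord_lt]
  try ring

lemma coord_curvOp1 {n : ℕ} (hn : 4 ≤ n) (a b c μ k : ℝ) (X Y Z : Fin n → ℝ) :
    coord n (curvOp n (Rt n a b c μ k) X Y Z) 1 =
      (a * coord n X 1 + μ * coord n X 0) * (a * gg n Y Z + μ * s1 n Y Z)
      - (a * gg n X Z + μ * s1 n X Z) * (a * coord n Y 1 + μ * coord n Y 0)
      + ((b * coord n X 1 - μ * coord n X 1) * (b * gg n Y Z + μ * s2 n Y Z)
      - (b * gg n X Z + μ * s2 n X Z) * (b * coord n Y 1 - μ * coord n Y 1))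
      + c^2 * (coord n X 1 * gg n Y Z - gg n X Z * coord n Y 1)
      + k * (coord n X 1 * gg n Y Z - gg n X Z * coord n Y 1) := by
  have h0 : (0:ℕ) < n := by omega
  have h1 : (1:ℕ) < n := by omega
  rw [coord_lt _ h1]
  have hc : curvOp n (Rt n a b c μ k) X Y Z ⟨1, h1⟩ = Rt n a b c μ k X Y Z (E n ⟨1, h1⟩) := rfl
  rw [hc, Rt_closed hn]
  simp only [ggE', s1, s2, coordE h1 h0, coordE h1 h1]
  norm_num
  simp only [← coord_lt]
  try ring

lemma Ct_zero {n : ℕ} (hn : 4 ≤ n) (a b c k : ℝ) (X1 X2 X3 X4 : Fin n → ℝ) :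
    Ct n a b c 0 k X1 X2 X3 X4 = 0 := by
  have h2 : ((n:ℝ)-2) ≠ 0 := by
    have : (4:ℝ) ≤ (n:ℝ) := by exact_mod_cast hn
    intro h; nlinarith
  have h1 : ((n:ℝ)-1) ≠ 0 := by
    have : (4:ℝ) ≤ (n:ℝ) := by exact_mod_cast hn
    intro h; nlinarith
  simp only [Ct, KN, Rt_closed hn, Ricc_closed hn, tau_closed hn]
  field_simp
  ring

lemma RC_mu_zero {n : ℕ} (hn : 4 ≤ n) (a b c k : ℝ) (X1 X2 X3 X4 X Y : Fin n → ℝ) :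
    RC n a b c 0 k X1 X2 X3 X4 X Y = 0 := by
  simp only [RC, dotT, Ct_zero hn]
  norm_num

lemma RC_case2 {n : ℕ} (hn : 4 ≤ n) (c μ : ℝ) (X1 X2 X3 X4 X Y : Fin n → ℝ) :
    RC n 0 0 c μ (-c^2) X1 X2 X3 X4 X Y = 0 := by
  simp only [RC, dotT, Ct, KN, gg_curvOp hn, gg_curvOp' hn, coord_curvOp0 hn, coord_curvOp1 hn,
    Ricc_closed hn, tau_closed hn, Rt_closed hn, s1, s2, pp]
  ring


lemma ne_n2 {n : ℕ} (hn : 4 ≤ n) : ((n:ℝ)-2) ≠ 0 := by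
  have : (4:ℝ) ≤ (n:ℝ) := by exact_mod_cast hn
  intro h; nlinarith

lemma ne_n1 {n : ℕ} (hn : 4 ≤ n) : ((n:ℝ)-1) ≠ 0 := by
  have : (4:ℝ) ≤ (n:ℝ) := by exact_mod_cast hn
  intro h; nlinarith

lemma RCval1 {n : ℕ} (hn : 4 ≤ n) (a b c μ k : ℝ)
    (h0 : (0:ℕ) < n) (h1 : (1:ℕ) < n) (h2 : (2:ℕ) < n) :
    RC n a b c μ k (E n ⟨0,h0⟩) (E n ⟨1,h1⟩) (E n ⟨0,h0⟩) (E n ⟨2,h2⟩) (E n ⟨0,h0⟩) (E n ⟨2,h2⟩)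
      = -(2*((n:ℝ)-3)/((n:ℝ)-2)) * (a*μ^3) := by
  simp only [RC, dotT, Ct, KN, gg_curvOp hn, gg_curvOp' hn, coord_curvOp0 hn, coord_curvOp1 hn,
    Ricc_closed hn, tau_closed hn, Rt_closed hn, s1, s2, pp, ggE, ggE',
    coordE h0 h0, coordE h0 h1, coordE h1 h0, coordE h1 h1, coordE h2 h0, coordE h2 h1, E]
  norm_num [Fin.mk.injEq]
  have h2' := ne_n2 hn
  have h1' := ne_n1 hn
  field_simp
  ring


lemma RCval2 {n : ℕ} (hn : 4 ≤ n) (a b c μ k : ℝ)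
    (h0 : (0:ℕ) < n) (h1 : (1:ℕ) < n) (h2 : (2:ℕ) < n) :
    RC n a b c μ k (E n ⟨0,h0⟩) (E n ⟨1,h1⟩) (E n ⟨0,h0⟩) (E n ⟨2,h2⟩) (E n ⟨1,h1⟩) (E n ⟨2,h2⟩)
      = -(2*((n:ℝ)-3)/((n:ℝ)-2)) * (μ^2*(a^2+b^2+c^2+k-b*μ)) := by
  simp only [RC, dotT, Ct, KN, gg_curvOp hn, gg_curvOp' hn, coord_curvOp0 hn, coord_curvOp1 hn,
    Ricc_closed hn, tau_closed hn, Rt_closed hn, s1, s2, pp, ggE, ggE',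
    coordE h0 h0, coordE h0 h1, coordE h1 h0, coordE h1 h1, coordE h2 h0, coordE h2 h1, E]
  norm_num [Fin.mk.injEq]
  have h2' := ne_n2 hn
  have h1' := ne_n1 hn
  field_simp
  ring

lemma RCval3 {n : ℕ} (hn : 4 ≤ n) (a b c μ k : ℝ)
    (h0 : (0:ℕ) < n) (h1 : (1:ℕ) < n) (h2 : (2:ℕ) < n) :
    RC n a b c μ k (E n ⟨0,h0⟩) (E n ⟨1,h1⟩) (E n ⟨1,h1⟩) (E n ⟨2,h2⟩) (E n ⟨0,h0⟩) (E n ⟨2,h2⟩)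
      = (2*((n:ℝ)-3)/((n:ℝ)-2)) * (μ^2*(a^2+b^2+c^2+k+b*μ)) := by
  simp only [RC, dotT, Ct, KN, gg_curvOp hn, gg_curvOp' hn, coord_curvOp0 hn, coord_curvOp1 hn,
    Ricc_closed hn, tau_closed hn, Rt_closed hn, s1, s2, pp, ggE, ggE',
    coordE h0 h0, coordE h0 h1, coordE h1 h0, coordE h1 h1, coordE h2 h0, coordE h2 h1, E]
  norm_num [Fin.mk.injEq]
  have h2' := ne_n2 hn
  have h1' := ne_n1 hn
  field_simp
  ring


/-- `R · C = 0` iff `μ = 0`, or `a = 0`, `b = 0` and `c² + k̃ = 0`;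
in particular if `k̃ > 0` then `R · C = 0` iff `μ = 0`. -/
theorem statement_4 (n : ℕ) (hn : 4 ≤ n) (a b c μ k : ℝ) :
    ((∀ X1 X2 X3 X4 X Y : Fin n → ℝ, RC n a b c μ k X1 X2 X3 X4 X Y = 0)
      ↔ (μ = 0 ∨ (a = 0 ∧ b = 0 ∧ c ^ 2 + k = 0)))
    ∧ (0 < k →
      ((∀ X1 X2 X3 X4 X Y : Fin n → ℝ, RC n a b c μ k X1 X2 X3 X4 X Y = 0) ↔ μ = 0)) := by
  have h0 : (0:ℕ) < n := by omega
  have h1 : (1:ℕ) < n := by omega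
  have h2 : (2:ℕ) < n := by omega
  have hr : (4:ℝ) ≤ (n:ℝ) := by exact_mod_cast hn
  have hκ : (2*((n:ℝ)-3)/((n:ℝ)-2)) ≠ 0 := by
    have : (0:ℝ) < 2*((n:ℝ)-3)/((n:ℝ)-2) := by
      apply div_pos <;> nlinarith
    linarith
  have main : (∀ X1 X2 X3 X4 X Y : Fin n → ℝ, RC n a b c μ k X1 X2 X3 X4 X Y = 0)
      ↔ (μ = 0 ∨ (a = 0 ∧ b = 0 ∧ c ^ 2 + k = 0)) := by
    constructor
    · intro h
      by_cases hμ : μ = 0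
      · exact Or.inl hμ
      · right
        have e1 := h (E n ⟨0,h0⟩) (E n ⟨1,h1⟩) (E n ⟨0,h0⟩) (E n ⟨2,h2⟩) (E n ⟨0,h0⟩) (E n ⟨2,h2⟩)
        rw [RCval1 hn a b c μ k h0 h1 h2] at e1
        have e2 := h (E n ⟨0,h0⟩) (E n ⟨1,h1⟩) (E n ⟨0,h0⟩) (E n ⟨2,h2⟩) (E n ⟨1,h1⟩) (E n ⟨2,h2⟩)
        rw [RCval2 hn a b c μ k h0 h1 h2] at e2
        have e3 := h (E n ⟨0,h0⟩) (E n ⟨1,h1⟩) (E n ⟨1,h1⟩) (E n ⟨2,h2⟩) (E n ⟨0,h0⟩) (E n ⟨2,h2⟩)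
        rw [RCval3 hn a b c μ k h0 h1 h2] at e3
        have f1 : a * μ^3 = 0 := by
          rcases mul_eq_zero.1 e1 with h' | h'
          · exact absurd h' (by simpa using hκ)
          · exact h'
        have ha : a = 0 := by
          rcases mul_eq_zero.1 f1 with h' | h'
          · exact h'
          · exact absurd (pow_eq_zero_iff (by norm_num)|>.1 h') hμ
        have f2 : μ^2*(a^2+b^2+c^2+k-b*μ) = 0 := by
          rcases mul_eq_zero.1 e2 with h' | h'
          · exact absurd h' (by simpa using hκ)
          · exact h'
        have f3 : μ^2*(a^2+b^2+c^2+k+b*μ) = 0 := by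
          rcases mul_eq_zero.1 e3 with h' | h'
          · exact absurd h' hκ
          · exact h'
        have hμ2 : μ^2 ≠ 0 := pow_ne_zero _ hμ
        have g2 : a^2+b^2+c^2+k-b*μ = 0 := by
          rcases mul_eq_zero.1 f2 with h' | h'
          · exact absurd h' hμ2
          · exact h'
        have g3 : a^2+b^2+c^2+k+b*μ = 0 := by
          rcases mul_eq_zero.1 f3 with h' | h'
          · exact absurd h' hμ2
          · exact h'
        have hb : b = 0 := by
          have hbμ : b * μ = 0 := by linarith
          rcases mul_eq_zero.1 hbμ with h' | h'
          · exact h'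
          · exact absurd h' hμ
        refine ⟨ha, hb, ?_⟩
        rw [ha, hb] at g2
        nlinarith [g2]
    · rintro (hμ | ⟨ha, hb, hck⟩) X1 X2 X3 X4 X Y
      · subst hμ; exact RC_mu_zero hn a b c k X1 X2 X3 X4 X Y
      · have hk : k = -c^2 := by linarith
        subst ha hb hk
        exact RC_case2 hn c μ X1 X2 X3 X4 X Y
  refine ⟨main, fun hkpos => ?_⟩
  rw [main]
  constructor
  · rintro (hμ | ⟨ha, hb, hck⟩)
    · exact hμ
    · nlinarith
  · exact Or.inl


end Wintgen
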